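/- arXiv:0911.5660 — 2 statements merged into one kernel-verified Lean document; each statement's English description precedes it below -/
import Mathlib

section
/- Let M be a stable matching in a stable marriage instance with ties such that there is no dangerous path with respect to M. Then for every maximum stable matching M_opt, |M_opt| ≤ (3/2)·|M|, i.e., M is a 3/2-approximation of the optimum. -/
/-!
Charge every edge `p` of a stable matching `N` to the edges of `M` it meets: one unit to each
`M`-edge at either endpoint, except that if one endpoint of `p` is free in `M` the whole two
units go to the `M`-edge at the other endpoint (both endpoints cannot be free, as `M` is
stable). Each `M`-edge `(m₁, w₁)` meets at most one `N`-edge at each end, so it receives at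
most four units, and four only when `(m₁, w)` and `(m, w₁)` lie in `N` with `w` and `m` free
in `M`. The path `(w, m₁, w₁, m)` is then dangerous unless `(m₁, w₁)` blocks
`{(m₁, w), (m, w₁)}`, but then it also blocks `N`. Hence `2 |N| ≤ 3 |M|`.
-/

/-- An instance of the stable marriage problem with ties: a bipartite
acceptability relation between men `U` and women `W`, together with preference
lists given by rank functions (a smaller rank means a more preferred partner;
equal ranks encode ties, i.e. indifference). -/
structure SMI (U W : Type*) where
  acc : U → W → Prop
  mrank : U → W → ℕ
  wrank : W → U → ℕ

namespace SMI

variable {U W : Type*}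

/-- A matching: a set of mutually acceptable pairs in which every man and
every woman appears at most once. -/
def IsMatching (I : SMI U W) (M : Finset (U × W)) : Prop :=
  (∀ p ∈ M, I.acc p.1 p.2) ∧
  (∀ p ∈ M, ∀ q ∈ M, p.1 = q.1 → p = q) ∧
  (∀ p ∈ M, ∀ q ∈ M, p.2 = q.2 → p = q)

/-- Man `m` is unmatched (free) in `M`. -/
def ManUnmatched (M : Finset (U × W)) (m : U) : Prop := ∀ w, (m, w) ∉ M

/-- Woman `w` is unmatched (free) in `M`. -/
def WomanUnmatched (M : Finset (U × W)) (w : W) : Prop := ∀ m, (m, w) ∉ M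

/-- `(m, w)` is a blocking pair for `M`: they are mutually acceptable, not
matched to each other, `m` is unmatched or strictly prefers `w` to his partner,
and `w` is unmatched or strictly prefers `m` to her partner. -/
def Blocking (I : SMI U W) (M : Finset (U × W)) (m : U) (w : W) : Prop :=
  I.acc m w ∧ (m, w) ∉ M ∧
  (∀ w', (m, w') ∈ M → I.mrank m w < I.mrank m w') ∧
  (∀ m', (m', w) ∈ M → I.wrank w m < I.wrank w m')

/-- `M` is a stable matching: a matching admitting no blocking pair. -/
def Stable (I : SMI U W) (M : Finset (U × W)) : Prop :=
  I.IsMatching M ∧ ∀ m w, ¬ I.Blocking M m w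

/-- A dangerous path `(w, m₁, w₁, m)` with respect to `M`: an alternating path
with `(m₁, w₁) ∈ M`, the edges `(m₁, w)` and `(m, w₁)` present but not in `M`,
`w` and `m` unmatched in `M`, such that `(m₁, w₁)` is not a blocking pair for
the matching `M' = {(m₁, w), (m, w₁)}`. -/
def DangerousPath [DecidableEq U] [DecidableEq W] (I : SMI U W) (M : Finset (U × W))
    (w : W) (m₁ : U) (w₁ : W) (m : U) : Prop :=
  I.acc m₁ w ∧ I.acc m w₁ ∧ (m₁, w₁) ∈ M ∧ (m₁, w) ∉ M ∧ (m, w₁) ∉ M ∧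
  WomanUnmatched M w ∧ ManUnmatched M m ∧
  ¬ I.Blocking ({(m₁, w), (m, w₁)} : Finset (U × W)) m₁ w₁

end SMI

open Finset

theorem Finset.card_nsmul_le_card_nsmul_of_sum_le {α β M : Type*} [AddCommMonoid M]
    [PartialOrder M] [IsOrderedAddMonoid M] {s : Finset α} {t : Finset β} (f : α → β → M)
    {a b : M} (hs : ∀ x ∈ s, a ≤ ∑ y ∈ t, f x y) (ht : ∀ y ∈ t, ∑ x ∈ s, f x y ≤ b) :
    #s • a ≤ #t • b :=
  calc #s • a = ∑ _x ∈ s, a := (sum_const a).symm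
    _ ≤ ∑ x ∈ s, ∑ y ∈ t, f x y := sum_le_sum hs
    _ = ∑ y ∈ t, ∑ x ∈ s, f x y := sum_comm
    _ ≤ ∑ _y ∈ t, b := sum_le_sum ht
    _ = #t • b := sum_const b

theorem Finset.sum_ite_eq_of_injOn {ι κ M : Type*} [AddCommMonoid M] [DecidableEq κ]
    {s : Finset ι} {g : ι → κ} (hg : Set.InjOn g s) {i : ι} (hi : i ∈ s) (f : ι → M) :
    ∑ j ∈ s, (if g j = g i then f j else 0) = f i := by
  rw [sum_eq_single_of_mem i hi fun j hj hji => if_neg fun h => hji (hg hj hi h), if_pos rfl]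

theorem Finset.sum_ite_le_of_injOn {ι κ : Type*} [DecidableEq κ] {s : Finset ι} {g : ι → κ}
    (hg : Set.InjOn g s) {k : κ} {f : ι → ℕ} {c : ℕ} (hf : ∀ i ∈ s, g i = k → f i ≤ c) :
    ∑ i ∈ s, (if k = g i then f i else 0) ≤ c := by
  by_cases h : ∃ i ∈ s, g i = k
  · obtain ⟨i, hi, rfl⟩ := h
    rw [sum_eq_single_of_mem i hi fun j hj hji => if_neg fun h => hji (hg hj hi h.symm),
      if_pos rfl]
    exact hf i hi rfl
  · push Not at h
    rw [sum_eq_zero fun j hj => if_neg fun h' => h j hj h'.symm]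
    exact Nat.zero_le c

namespace SMI

variable {U W : Type*} {I : SMI U W} {M N : Finset (U × W)}

theorem IsMatching.injOn_fst (hM : I.IsMatching M) : Set.InjOn Prod.fst (M : Set (U × W)) :=
  fun _ hp _ hq => hM.2.1 _ hp _ hq

theorem IsMatching.injOn_snd (hM : I.IsMatching M) : Set.InjOn Prod.snd (M : Set (U × W)) :=
  fun _ hp _ hq => hM.2.2 _ hp _ hq

open Classical in
theorem IsMatching.sum_ite_fst_eq [DecidableEq U] (hM : I.IsMatching M) (m : U) (c : ℕ) :
    ∑ e ∈ M, (if e.1 = m then c else 0) = if ManUnmatched M m then 0 else c := by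
  split_ifs with hm
  · exact sum_eq_zero fun e he => if_neg fun h : e.1 = m => hm e.2 (h ▸ he)
  · obtain ⟨w, hw⟩ : ∃ w, (m, w) ∈ M := by simpa [ManUnmatched] using hm
    exact sum_ite_eq_of_injOn hM.injOn_fst hw fun _ => c

open Classical in
theorem IsMatching.sum_ite_snd_eq [DecidableEq W] (hM : I.IsMatching M) (w : W) (c : ℕ) :
    ∑ e ∈ M, (if e.2 = w then c else 0) = if WomanUnmatched M w then 0 else c := by
  split_ifs with hw
  · exact sum_eq_zero fun e he => if_neg fun h : e.2 = w => hw e.1 (h ▸ he)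
  · obtain ⟨m, hm⟩ : ∃ m, (m, w) ∈ M := by simpa [WomanUnmatched] using hw
    exact sum_ite_eq_of_injOn hM.injOn_snd hm fun _ => c

theorem Stable.not_manUnmatched_and_womanUnmatched (hM : I.Stable M) {m : U} {w : W}
    (hmw : I.acc m w) : ¬ (ManUnmatched M m ∧ WomanUnmatched M w) := fun ⟨hm, hw⟩ =>
  hM.2 m w ⟨hmw, hm w, fun w' h => absurd h (hm w'), fun m' h => absurd h (hw m')⟩

theorem Blocking.of_partners_subset {S : Finset (U × W)} {m : U} {w : W}
    (hb : I.Blocking S m w) (hmw : (m, w) ∉ N) (hm : ∀ w', (m, w') ∈ N → (m, w') ∈ S)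
    (hw : ∀ m', (m', w) ∈ N → (m', w) ∈ S) : I.Blocking N m w :=
  ⟨hb.1, hmw, fun w' h => hb.2.2.1 w' (hm w' h), fun m' h => hb.2.2.2 m' (hw m' h)⟩

variable [DecidableEq U] [DecidableEq W]

theorem Stable.dangerousPath (hN : I.Stable N)
    {w : W} {m₁ : U} {w₁ : W} {m : U} (he : (m₁, w₁) ∈ M) (hw : (m₁, w) ∈ N)
    (hm : (m, w₁) ∈ N) (hwM : WomanUnmatched M w) (hmM : ManUnmatched M m) :
    I.DangerousPath M w m₁ w₁ m := by
  refine ⟨hN.1.1 _ hw, hN.1.1 _ hm, he, hwM m₁, hmM w₁, hwM, hmM, fun hb => hN.2 m₁ w₁ ?_⟩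
  refine hb.of_partners_subset (fun h => hwM m₁ ?_) (fun w' h => ?_) (fun m' h => ?_)
  · rwa [show w = w₁ from congrArg Prod.snd (hN.1.injOn_fst hw h rfl)]
  · rw [show (m₁, w') = (m₁, w) from hN.1.injOn_fst h hw rfl]
    exact mem_insert_self _ _
  · rw [show (m', w₁) = (m, w₁) from hN.1.injOn_snd h hm rfl]
    exact mem_insert_of_mem (mem_singleton_self _)

open Classical in
/-- The units an edge `p` of another matching pays to the edge `e` of `M`. -/
noncomputable def charge (M : Finset (U × W))
    (p e : U × W) : ℕ :=
  (if e.1 = p.1 then (if WomanUnmatched M p.2 then 2 else 1) else 0) +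
  (if e.2 = p.2 then (if ManUnmatched M p.1 then 2 else 1) else 0)

theorem Stable.sum_charge_eq_two (hM : I.Stable M) {p : U × W} (hp : I.acc p.1 p.2) :
    ∑ e ∈ M, charge M p e = 2 := by
  have := hM.not_manUnmatched_and_womanUnmatched hp
  simp only [charge]
  rw [sum_add_distrib, hM.1.sum_ite_fst_eq, hM.1.sum_ite_snd_eq]
  split_ifs <;> simp_all

theorem Stable.sum_charge_le_three (hN : I.Stable N)
    (hnd : ∀ (w : W) (m₁ : U) (w₁ : W) (m : U), ¬ I.DangerousPath M w m₁ w₁ m)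
    {e : U × W} (he : e ∈ M) : ∑ p ∈ N, charge M p e ≤ 3 := by
  classical
  have hfst := sum_ite_le_of_injOn hN.1.injOn_fst (k := e.1)
    (f := fun p => if WomanUnmatched M p.2 then 2 else 1)
    (c := if ∃ p ∈ N, p.1 = e.1 ∧ WomanUnmatched M p.2 then 2 else 1)
    fun p hp hpe => by
      split_ifs with hw h
      exacts [le_rfl, absurd ⟨p, hp, hpe, hw⟩ h, by omega, le_rfl]
  have hsnd := sum_ite_le_of_injOn hN.1.injOn_snd (k := e.2)
    (f := fun p => if ManUnmatched M p.1 then 2 else 1)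
    (c := if ∃ q ∈ N, q.2 = e.2 ∧ ManUnmatched M q.1 then 2 else 1)
    fun q hq hqe => by
      split_ifs with hm h
      exacts [le_rfl, absurd ⟨q, hq, hqe, hm⟩ h, by omega, le_rfl]
  have hnot : ¬ ((∃ p ∈ N, p.1 = e.1 ∧ WomanUnmatched M p.2) ∧
      ∃ q ∈ N, q.2 = e.2 ∧ ManUnmatched M q.1) := by
    rintro ⟨⟨⟨m₁, w⟩, hp, rfl, hw⟩, ⟨⟨m, w₁⟩, hq, rfl, hm⟩⟩
    exact hnd _ _ _ _ (hN.dangerousPath he hp hq hw hm)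
  simp only [charge]
  rw [sum_add_distrib]
  split_ifs at hfst hsnd with hw hm hm
  exacts [absurd ⟨hw, hm⟩ hnot, by omega, by omega, by omega]

end SMI

theorem stable_no_dangerous_path_is_three_halves_approximation_general
    {U W : Type*} [DecidableEq U] [DecidableEq W]
    (I : SMI U W) (M : Finset (U × W)) (hM : I.Stable M)
    (hnd : ∀ (w : W) (m₁ : U) (w₁ : W) (m : U), ¬ I.DangerousPath M w m₁ w₁ m) :
    ∀ Mopt : Finset (U × W), I.Stable Mopt →
      (∀ N : Finset (U × W), I.Stable N → N.card ≤ Mopt.card) →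
      (Mopt.card : ℝ) ≤ 3 / 2 * M.card := by
  intro Mopt hOpt _
  have hcount : Mopt.card * 2 ≤ M.card * 3 :=
    card_nsmul_le_card_nsmul_of_sum_le (SMI.charge M)
      (fun p hp => (hM.sum_charge_eq_two (hOpt.1.1 p hp)).ge)
      (fun e he => hOpt.sum_charge_le_three hnd he)
  have hcount' : (Mopt.card : ℝ) * 2 ≤ M.card * 3 := by exact_mod_cast hcount
  linarith

/-- if `M` is a stable matching admitting no dangerous path, then
for every maximum stable matching `Mopt` we have `|Mopt| ≤ (3/2)·|M|`. -/
theorem stable_no_dangerous_path_is_three_halves_approximation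
    {U W : Type*} [DecidableEq U] [DecidableEq W] [Fintype U] [Fintype W]
    (I : SMI U W) (M : Finset (U × W)) (hM : I.Stable M)
    (hnd : ∀ (w : W) (m₁ : U) (w₁ : W) (m : U), ¬ I.DangerousPath M w m₁ w₁ m) :
    ∀ Mopt : Finset (U × W), I.Stable Mopt →
      (∀ N : Finset (U × W), I.Stable N → N.card ≤ Mopt.card) →
      (Mopt.card : ℝ) ≤ 3 / 2 * M.card :=
  stable_no_dangerous_path_is_three_halves_approximation_general I M hM hnd
end

section
/- Let M, M_opt be matchings in a finite graph and k ≥ 1. If every connected component of M ⊕ M_opt that is an augmenting path for M has length at least 2k+1, then |M_opt| ≤ ((k+1)/k)·|M|. -/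
open scoped symmDiff

/-- `M` is a matching in the graph `G`: a set of edges of `G` no two of which
share a vertex. -/
def IsMatchingIn {V : Type*} (G : SimpleGraph V) (M : Finset (Sym2 V)) : Prop :=
  ↑M ⊆ G.edgeSet ∧ ∀ e ∈ M, ∀ f ∈ M, e ≠ f → ∀ v : V, v ∈ e → v ∉ f

/-- `v` is unmatched (free) in the matching `M`. -/
def UnmatchedIn {V : Type*} (M : Finset (Sym2 V)) (v : V) : Prop := ∀ e ∈ M, v ∉ e

/-!
Split `M ∆ Mopt` into connected components. A vertex meets at most one edge of `M \ Mopt` and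
at most one of `Mopt \ M`, so every component has maximum degree 2; being connected, it has at
least as many edges as vertices minus one, hence at most two vertices of degree one, and an even
number of them by the handshake lemma. Counting vertex–edge incidences inside a component, a
component with more `Mopt`-edges than `M`-edges therefore has exactly one more, and both of its
degree-one vertices are `M`-free. The path joining them is augmenting, so it has at least
`2k + 2` vertices, and every vertex of the component other than these two ends is covered by
`M \ Mopt`: the component has at least `k` edges of `M`. Hence `k |Mopt \ M| ≤ (k + 1) |M \ Mopt|`
component by component, and the common edges only help.
-/

open Finset SimpleGraph

lemma sum_card_filter_mem_eq_two_mul_card {V : Type*} [Fintype V] [DecidableEq V]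
    {F : Finset (Sym2 V)} (hF : ∀ e ∈ F, ¬ e.IsDiag) :
    ∑ v, #{e ∈ F | v ∈ e} = 2 * #F := by
  have hdouble := sum_card_bipartiteAbove_eq_sum_card_bipartiteBelow (s := univ) (t := F)
    (r := fun v e => v ∈ e)
  simp only [bipartiteAbove, bipartiteBelow] at hdouble
  rw [hdouble, mul_comm, ← smul_eq_mul, ← sum_const]
  refine sum_congr rfl fun e he => ?_
  rw [← Sym2.card_toFinset_of_not_isDiag e (hF e he)]
  congr 1
  ext v
  simp

lemma sum_eq_add_two_and_card_eq_two_of_lt {ι : Type*} {S : Finset ι} {a b : ι → ℕ}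
    (ha : ∀ i ∈ S, a i ≤ 1) (hb : ∀ i ∈ S, b i ≤ 1)
    (hone : #{i ∈ S | a i + b i = 1} ≤ 2 ∧ Even #{i ∈ S | a i + b i = 1})
    (hlt : ∑ i ∈ S, b i < ∑ i ∈ S, a i) :
    ∑ i ∈ S, a i = ∑ i ∈ S, b i + 2 ∧ #{i ∈ S | a i = 1 ∧ b i = 0} = 2 := by
  have hexcess : ∑ i ∈ S, a i + #{i ∈ S | a i = 0 ∧ b i = 1}
      = ∑ i ∈ S, b i + #{i ∈ S | a i = 1 ∧ b i = 0} := by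
    simp only [card_filter, ← sum_add_distrib]
    refine sum_congr rfl fun i hi => ?_
    have := ha i hi
    have := hb i hi
    split_ifs <;> omega
  have hodd_split : #{i ∈ S | a i = 1 ∧ b i = 0} + #{i ∈ S | a i = 0 ∧ b i = 1}
      = #{i ∈ S | a i + b i = 1} := by
    simp only [card_filter, ← sum_add_distrib]
    refine sum_congr rfl fun i hi => ?_
    have := ha i hi
    have := hb i hi
    split_ifs <;> omega
  obtain ⟨hle, r, hr⟩ := hone
  omega

lemma mul_card_le_mul_card_of_mul_card_sdiff_le {α : Type*} [DecidableEq α] {s t : Finset α}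
    {k : ℕ} (h : k * #(t \ s) ≤ (k + 1) * #(s \ t)) : k * #t ≤ (k + 1) * #s := by
  rw [← card_sdiff_add_card_inter t s, ← card_sdiff_add_card_inter s t, inter_comm]
  linarith

namespace SimpleGraph

variable {V : Type*} [Fintype V] {G : SimpleGraph V} [DecidableRel G.Adj]

lemma Connected.card_degree_eq_one_le_two (hG : G.Connected) (hdeg : ∀ v, G.degree v ≤ 2) :
    #{v | G.degree v = 1} ≤ 2 := by
  have hV := hG.card_vert_le_card_edgeSet_add_one
  rw [Nat.card_eq_fintype_card, Nat.card_eq_fintype_card, ← edgeFinset_card] at hV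
  have hleaves : #{v | G.degree v = 1} ≤ ∑ v, (2 - G.degree v) := by
    rw [card_filter]
    gcongr with v
    split_ifs <;> omega
  have hdefect : ∑ v, (2 - G.degree v) + ∑ v, G.degree v = 2 * Fintype.card V := by
    rw [← sum_add_distrib, sum_congr rfl fun v _ => Nat.sub_add_cancel (hdeg v)]
    simp [mul_comm]
  have := G.sum_degrees_eq_twice_card_edges
  omega

lemma even_card_degree_eq_one (hdeg : ∀ v, G.degree v ≤ 2) : Even #{v | G.degree v = 1} := by
  convert G.even_card_odd_degree_vertices using 3 with v
  have := hdeg v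
  rw [Nat.odd_iff]
  omega

lemma ConnectedComponent.degree_pos_of_ne {C : G.ConnectedComponent} {u v w : V}
    (hu : u ∈ C.supp) (hv : v ∈ C.supp) (huv : u ≠ v) (hw : w ∈ C.supp) :
    0 < G.degree w := by
  rw [degree_pos_iff_mem_support]
  obtain rfl | hwu := eq_or_ne w u
  · exact mem_support_of_reachable huv (C.reachable_of_mem_supp hu hv)
  · exact mem_support_of_reachable hwu (C.reachable_of_mem_supp hw hu)

variable [DecidableEq V]

lemma ConnectedComponent.card_degree_eq_one_le_two_and_even (C : G.ConnectedComponent)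
    (hdeg : ∀ v, G.degree v ≤ 2) :
    #{v ∈ C.supp.toFinset | G.degree v = 1} ≤ 2 ∧
      Even #{v ∈ C.supp.toFinset | G.degree v = 1} := by
  classical
  have hdegC (v : C.supp) : (G.induce C.supp).degree v = G.degree v :=
    degree_induce_of_neighborSet_subset fun _ hw => C.mem_supp_of_adj_mem_supp v.2 hw
  have hcard : #{v : C.supp | (G.induce C.supp).degree v = 1}
      = #{v ∈ C.supp.toFinset | G.degree v = 1} := by
    rw [← card_map (Function.Embedding.subtype _)]
    congr 1
    ext v
    simp only [mem_map, mem_filter, mem_univ, true_and, Function.Embedding.coe_subtype,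
      Set.mem_toFinset]
    constructor
    · rintro ⟨w, hw, rfl⟩
      exact ⟨w.2, (hdegC w).symm.trans hw⟩
    · rintro ⟨hv, hv1⟩
      exact ⟨⟨v, hv⟩, (hdegC _).trans hv1, rfl⟩
  rw [← hcard]
  have hconn : (G.induce C.supp).Connected := C.connected_toSimpleGraph
  have hdeg' (v : C.supp) : (G.induce C.supp).degree v ≤ 2 := (hdegC v).trans_le (hdeg v)
  exact ⟨hconn.card_degree_eq_one_le_two hdeg', even_card_degree_eq_one hdeg'⟩

lemma Walk.IsPath.length_lt_card_supp {u v : V} {p : G.Walk u v} (hp : p.IsPath)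
    {C : G.ConnectedComponent} (hu : u ∈ C.supp) : p.length < #C.supp.toFinset := by
  have hsupport : p.support.toFinset ⊆ C.supp.toFinset := by
    intro w hw
    rw [List.mem_toFinset] at hw
    rw [Set.mem_toFinset, ConnectedComponent.mem_supp_iff]
    exact (ConnectedComponent.sound (p.takeUntil w hw).reachable).symm.trans hu
  calc p.length < p.support.length := by simp
    _ = #p.support.toFinset := (List.toFinset_card_of_nodup hp.support_nodup).symm
    _ ≤ _ := card_le_card hsupport

lemma ConnectedComponent.sum_sum_supp {β : Type*} [AddCommMonoid β] (f : V → β) :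
    ∑ C : G.ConnectedComponent, ∑ v ∈ C.supp.toFinset, f v = ∑ v, f v := by
  classical
  rw [← sum_fiberwise univ G.connectedComponentMk f]
  congr! 2 with C
  ext v
  simp [ConnectedComponent.mem_supp_iff]

omit [DecidableRel G.Adj] in
lemma degree_fromEdgeSet_finset {F : Finset (Sym2 V)} (hF : ∀ e ∈ F, ¬ e.IsDiag) (v : V) :
    (fromEdgeSet (F : Set (Sym2 V))).degree v = #{e ∈ F | v ∈ e} := by
  rw [← card_incidenceFinset_eq_degree]
  congr 1
  ext e
  simp only [mem_incidenceFinset, incidenceSet, edgeSet_fromEdgeSet, Set.mem_ofPred_eq,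
    Set.mem_sdiff, mem_coe, Sym2.mem_diagSet, mem_filter]
  exact ⟨fun h => ⟨h.1.1, h.2⟩, fun h => ⟨⟨h.1, hF e h.1⟩, h.2⟩⟩

end SimpleGraph

section Matching

variable {V : Type*} [DecidableEq V] {G : SimpleGraph V} {M N : Finset (Sym2 V)}

abbrev symmDiffGraph (M N : Finset (Sym2 V)) : SimpleGraph V := fromEdgeSet ↑(M ∆ N)

-- Paths of `M ∆ N` alternate between `M` and `N`, so those joining two `M`-free vertices are
-- exactly the augmenting paths of `M` inside `M ∆ N`.
def AugmentingPathsAtLeast (M N : Finset (Sym2 V)) (n : ℕ) : Prop :=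
  ∀ (u v : V) (p : (symmDiffGraph M N).Walk u v),
    p.IsPath → UnmatchedIn M u → UnmatchedIn M v → p.edges ≠ [] → n ≤ p.length

omit [DecidableEq V] in
lemma IsMatchingIn.subset (hM : IsMatchingIn G M) {F : Finset (Sym2 V)} (hF : F ⊆ M) :
    IsMatchingIn G F :=
  ⟨(coe_subset.2 hF).trans hM.1, fun e he f hf => hM.2 e (hF he) f (hF hf)⟩

omit [DecidableEq V] in
lemma IsMatchingIn.not_isDiag (hM : IsMatchingIn G M) {e : Sym2 V} (he : e ∈ M) : ¬ e.IsDiag :=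
  G.not_isDiag_of_mem_edgeSet (hM.1 he)

lemma IsMatchingIn.sdiff (hM : IsMatchingIn G M) (N : Finset (Sym2 V)) :
    IsMatchingIn G (M \ N) :=
  hM.subset sdiff_subset

lemma IsMatchingIn.card_filter_mem_le_one (hM : IsMatchingIn G M) (v : V) :
    #{e ∈ M | v ∈ e} ≤ 1 :=
  card_le_one.2 fun e he f hf => by
    rw [mem_filter] at he hf
    by_contra hne
    exact hM.2 e he.1 f hf.1 hne v he.2 hf.2

lemma card_filter_mem_symmDiff (v : V) :
    #{e ∈ M ∆ N | v ∈ e} = #{e ∈ M \ N | v ∈ e} + #{e ∈ N \ M | v ∈ e} := by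
  rw [symmDiff_def, sup_eq_union, filter_union,
    card_union_of_disjoint (disjoint_filter_filter disjoint_sdiff_sdiff)]

lemma IsMatchingIn.unmatchedIn_of_card_filter_mem (hN : IsMatchingIn G N) {v : V}
    (hvN : #{e ∈ N \ M | v ∈ e} = 1) (hvM : #{e ∈ M \ N | v ∈ e} = 0) :
    UnmatchedIn M v := by
  obtain ⟨e, he⟩ := card_pos.1 (hvN ▸ Nat.one_pos)
  rw [mem_filter, mem_sdiff] at he
  intro f hfM hvf
  by_cases hfN : f ∈ N
  · exact hN.2 e he.1.1 f hfN (fun hef => he.1.2 (hef ▸ hfM)) v he.2 hvf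
  · rw [card_eq_zero, filter_eq_empty_iff] at hvM
    exact hvM (mem_sdiff.2 ⟨hfM, hfN⟩) hvf

variable [Fintype V]

lemma degree_symmDiffGraph (hM : IsMatchingIn G M) (hN : IsMatchingIn G N) (v : V) :
    (symmDiffGraph M N).degree v = #{e ∈ M \ N | v ∈ e} + #{e ∈ N \ M | v ∈ e} := by
  rw [degree_fromEdgeSet_finset, card_filter_mem_symmDiff]
  intro e he
  rcases mem_symmDiff.1 he with ⟨he, -⟩ | ⟨he, -⟩
  exacts [hM.not_isDiag he, hN.not_isDiag he]

lemma AugmentingPathsAtLeast.two_mul_le_sum {k : ℕ}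
    (hAug : AugmentingPathsAtLeast M N (2 * k + 1)) (hM : IsMatchingIn G M)
    (hN : IsMatchingIn G N) {C : (symmDiffGraph M N).ConnectedComponent}
    (hfree : #{v ∈ C.supp.toFinset | #{e ∈ N \ M | v ∈ e} = 1 ∧ #{e ∈ M \ N | v ∈ e} = 0}
      = 2) :
    2 * k ≤ ∑ v ∈ C.supp.toFinset, #{e ∈ M \ N | v ∈ e} := by
  set X := {v ∈ C.supp.toFinset | #{e ∈ N \ M | v ∈ e} = 1 ∧ #{e ∈ M \ N | v ∈ e} = 0}
  obtain ⟨u, w, huw, hX⟩ := card_eq_two.1 hfree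
  have hu : u ∈ X := hX ▸ mem_insert_self u {w}
  have hw : w ∈ X := hX ▸ mem_insert_of_mem (mem_singleton_self w)
  rw [mem_filter, Set.mem_toFinset] at hu hw
  obtain ⟨p, hp⟩ := (C.reachable_of_mem_supp hu.1 hw.1).exists_isPath
  have hlen := hAug u w p hp (hN.unmatchedIn_of_card_filter_mem hu.2.1 hu.2.2)
    (hN.unmatchedIn_of_card_filter_mem hw.2.1 hw.2.2)
    (Walk.edges_eq_nil.not.2 (Walk.not_nil_of_ne huw))
  have hcard := hp.length_lt_card_supp hu.1
  have hcover : ∀ v ∈ C.supp.toFinset \ X, 1 ≤ #{e ∈ M \ N | v ∈ e} := by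
    intro v hv
    rw [mem_sdiff, mem_filter, Set.mem_toFinset] at hv
    have hpos := C.degree_pos_of_ne hu.1 hw.1 huw hv.1
    rw [degree_symmDiffGraph hM hN] at hpos
    have := (hN.sdiff M).card_filter_mem_le_one v
    by_contra
    exact hv.2 ⟨hv.1, by omega, by omega⟩
  calc 2 * k ≤ #(C.supp.toFinset \ X) := by
        rw [card_sdiff_of_subset (filter_subset _ _), hfree]; omega
    _ ≤ ∑ v ∈ C.supp.toFinset \ X, #{e ∈ M \ N | v ∈ e} := by
        simpa using card_nsmul_le_sum _ _ 1 hcover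
    _ ≤ ∑ v ∈ C.supp.toFinset, #{e ∈ M \ N | v ∈ e} := sum_le_sum_of_subset sdiff_subset

lemma AugmentingPathsAtLeast.mul_sum_le_mul_sum {k : ℕ}
    (hAug : AugmentingPathsAtLeast M N (2 * k + 1)) (hM : IsMatchingIn G M)
    (hN : IsMatchingIn G N) (C : (symmDiffGraph M N).ConnectedComponent) :
    k * ∑ v ∈ C.supp.toFinset, #{e ∈ N \ M | v ∈ e}
      ≤ (k + 1) * ∑ v ∈ C.supp.toFinset, #{e ∈ M \ N | v ∈ e} := by
  have hNM (v : V) := (hN.sdiff M).card_filter_mem_le_one v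
  have hMN (v : V) := (hM.sdiff N).card_filter_mem_le_one v
  rcases le_or_gt (∑ v ∈ C.supp.toFinset, #{e ∈ N \ M | v ∈ e})
    (∑ v ∈ C.supp.toFinset, #{e ∈ M \ N | v ∈ e}) with hle | hlt
  · exact (Nat.mul_le_mul_left k hle).trans (Nat.mul_le_mul_right _ k.le_succ)
  have hleaves := C.card_degree_eq_one_le_two_and_even fun v => by
    rw [degree_symmDiffGraph hM hN]; linarith [hNM v, hMN v]
  simp only [degree_symmDiffGraph hM hN, add_comm #{e ∈ M \ N | _ ∈ e}] at hleaves
  obtain ⟨hsum, hfree⟩ :=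
    sum_eq_add_two_and_card_eq_two_of_lt (fun v _ => hNM v) (fun v _ => hMN v) hleaves hlt
  have := hAug.two_mul_le_sum hM hN hfree
  rw [hsum]
  linarith

lemma AugmentingPathsAtLeast.mul_card_sdiff_le {k : ℕ}
    (hAug : AugmentingPathsAtLeast M N (2 * k + 1)) (hM : IsMatchingIn G M)
    (hN : IsMatchingIn G N) : k * #(N \ M) ≤ (k + 1) * #(M \ N) := by
  have htwice {F : Finset (Sym2 V)} (hF : IsMatchingIn G F) :
      2 * #F = ∑ C : (symmDiffGraph M N).ConnectedComponent,
        ∑ v ∈ C.supp.toFinset, #{e ∈ F | v ∈ e} := by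
    rw [ConnectedComponent.sum_sum_supp,
      sum_card_filter_mem_eq_two_mul_card fun _ => hF.not_isDiag]
  have := sum_le_sum fun C (_ : C ∈ univ) => hAug.mul_sum_le_mul_sum hM hN C
  rw [← mul_sum, ← mul_sum, ← htwice (hN.sdiff M), ← htwice (hM.sdiff N)] at this
  linarith

end Matching

/-- let `M`, `Mopt` be matchings in a finite graph and `k ≥ 1`.
If every connected component of `M ∆ Mopt` that is an augmenting path for `M`
(equivalently, every nontrivial path in the symmetric-difference graph between
two `M`-unmatched vertices) has length at least `2k+1`, then
`|Mopt| ≤ ((k+1)/k)·|M|`. -/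
theorem long_augmenting_paths_ratio_bound
    {V : Type*} [Fintype V] [DecidableEq V] (G : SimpleGraph V)
    (M Mopt : Finset (Sym2 V)) (hM : IsMatchingIn G M) (hMopt : IsMatchingIn G Mopt)
    (k : ℕ) (hk : 1 ≤ k)
    (h : ∀ (u v : V)
      (p : (SimpleGraph.fromEdgeSet ((M ∆ Mopt : Finset (Sym2 V)) : Set (Sym2 V))).Walk u v),
      p.IsPath → UnmatchedIn M u → UnmatchedIn M v → p.edges ≠ [] →
      2 * k + 1 ≤ p.length) :
    (Mopt.card : ℝ) ≤ (k + 1) / k * M.card := by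
  have hcard : k * #Mopt ≤ (k + 1) * #M :=
    mul_card_le_mul_card_of_mul_card_sdiff_le
      (AugmentingPathsAtLeast.mul_card_sdiff_le h hM hMopt)
  have hk0 : (0 : ℝ) < k := by exact_mod_cast hk
  rw [div_mul_eq_mul_div, le_div_iff₀ hk0, mul_comm]
  exact_mod_cast hcard
end
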